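/- Let G be a profinite group and let M₀ ← M₁ ← M₂ ← ⋯ be a tower of discrete G-modules with G-equivariant transition maps, and let M = lim_i M_i be its inverse limit, i.e., the subgroup of ∏_i M_i consisting of compatible sequences, with the subspace topology of the product of the discrete spaces M_i and the componentwise G-action. For each n ≥ 0, let G act on C(G^{n+1}, M) and on each C(G^{n+1}, M_i) by ((g · f)(g₁, …, g_{n+1})) = g · f(g⁻¹g₁, …, g⁻¹g_{n+1}). Then the natural map C(G^{n+1}, M)^G → lim_i (C(G^{n+1}, M_i)^G) induced by postcomposition with the projections M → M_i is an isomorphism of abelian groups. -/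

import Mathlib

universe u

variable (G : Type u) [Group G] [TopologicalSpace G] [IsTopologicalGroup G]
  [CompactSpace G] [T2Space G] [TotallyDisconnectedSpace G]

/-- Any additive group with the discrete topology is a topological additive group. -/
instance (priority := 100) discreteTopologicalAddGroup
    {A : Type*} [AddGroup A] [TopologicalSpace A] [DiscreteTopology A] :
    IsTopologicalAddGroup A := ⟨⟩

section Tower

-- A tower `M₀ ← M₁ ← M₂ ← ⋯` of discrete `G`-modules, with `G`-equivariant additive
-- transition maps `φ i : M (i+1) →+ M i`.
variable (M : ℕ → Type u) [∀ i, AddCommGroup (M i)] [∀ i, TopologicalSpace (M i)]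
  [∀ i, DiscreteTopology (M i)] [∀ i, DistribMulAction G (M i)]
  [∀ i, ContinuousSMul G (M i)]
  (φ : ∀ i : ℕ, M (i + 1) →+ M i)
  (hφ : ∀ (i : ℕ) (g : G) (m : M (i + 1)), φ i (g • m) = g • φ i m)

/-- The inverse limit `lim_i M_i` of the tower, as the additive subgroup of `∏ i, M i`
consisting of compatible sequences.  Its topology is the subspace topology of the
product of the discrete spaces `M i` (supplied automatically by the `Subtype` and
`Pi` topology instances). -/
def towerLimit : AddSubgroup (∀ i, M i) where
  carrier := {s | ∀ i, φ i (s (i + 1)) = s i}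
  zero_mem' := by intro i; simp
  add_mem' := by intro a b ha hb i; simp [ha i, hb i]
  neg_mem' := by intro a ha i; simp [ha i]

/-- The componentwise `G`-action on the inverse limit `lim_i M_i`. -/
def towerLimitSMul (g : G) (s : towerLimit M φ) : towerLimit M φ :=
  ⟨fun i => g • (s : ∀ i, M i) i, fun i => by
    rw [hφ i g ((s : ∀ i, M i) (i + 1)), s.2 i]⟩

/-- The `G`-fixed points of `C(G^{n+1}, lim_i M_i)` under the action
`(g • f)(g₁, …, g_{n+1}) = g • f (g⁻¹g₁, …, g⁻¹g_{n+1})`, as an additive subgroup. -/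
def limitHomogeneousFixedPoints (n : ℕ) :
    AddSubgroup C((Fin (n + 1) → G), towerLimit M φ) where
  carrier := {f | ∀ (g : G) (t : Fin (n + 1) → G),
    towerLimitSMul G M φ hφ g (f (fun i => g⁻¹ * t i)) = f t}
  zero_mem' := by
    intro g t
    ext i
    show g • (0 : M i) = _
    simp
  add_mem' := by
    intro a b ha hb g t
    ext i
    have ha' := congrArg (fun s : towerLimit M φ => (s : ∀ i, M i) i) (ha g t)
    have hb' := congrArg (fun s : towerLimit M φ => (s : ∀ i, M i) i) (hb g t)
    show g • ((a (fun i => g⁻¹ * t i) : ∀ i, M i) i + (b (fun i => g⁻¹ * t i) : ∀ i, M i) i)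
      = (a t : ∀ i, M i) i + (b t : ∀ i, M i) i
    rw [smul_add]
    exact congrArg₂ (· + ·) ha' hb'
  neg_mem' := by
    intro a ha g t
    ext i
    have ha' := congrArg (fun s : towerLimit M φ => (s : ∀ i, M i) i) (ha g t)
    show g • (-(a (fun i => g⁻¹ * t i) : ∀ i, M i) i) = -(a t : ∀ i, M i) i
    rw [smul_neg]
    exact congrArg Neg.neg ha'

/-- `lim_i (C(G^{n+1}, M_i)^G)`: the additive subgroup of `∏ i, C(G^{n+1}, M_i)`
consisting of sequences of `G`-fixed cochains (for the action
`(g • f)(g₁, …, g_{n+1}) = g • f (g⁻¹g₁, …, g⁻¹g_{n+1})`) compatible with the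
transition maps of the tower. -/
def limitOfFixedPoints (n : ℕ) : AddSubgroup (∀ i, C((Fin (n + 1) → G), M i)) where
  carrier := {F | (∀ (i : ℕ) (g : G) (t : Fin (n + 1) → G),
      g • F i (fun j => g⁻¹ * t j) = F i t) ∧
    (∀ (i : ℕ) (t : Fin (n + 1) → G), φ i (F (i + 1) t) = F i t)}
  zero_mem' := by constructor <;> intro i <;> simp
  add_mem' := by
    rintro a b ⟨ha1, ha2⟩ ⟨hb1, hb2⟩
    constructor
    · intro i g t; simp [smul_add, ha1 i g t, hb1 i g t]
    · intro i t; simp [ha2 i t, hb2 i t]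
  neg_mem' := by
    rintro a ⟨ha1, ha2⟩
    constructor
    · intro i g t; simp [smul_neg, ha1 i g t]
    · intro i t; simp [ha2 i t]

/-! Since `towerLimit M φ` carries the subspace topology of the product, a continuous map into it
is the same as a compatible family of continuous maps into the `M i`. The addition and the
`G`-action on the limit are coordinatewise, so sums and `G`-invariance correspond under this
bijection. -/

section UniversalProperty

variable {N : ℕ → Type*} [∀ i, AddCommGroup (N i)] [∀ i, TopologicalSpace (N i)]
  {ψ : ∀ i : ℕ, N (i + 1) →+ N i} {X : Type*} [TopologicalSpace X]

def towerLimit.proj (i : ℕ) : C(towerLimit N ψ, N i) :=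
  ⟨fun s => (s : ∀ i, N i) i, (continuous_apply i).comp continuous_subtype_val⟩

theorem towerLimit.map_proj_succ (s : towerLimit N ψ) (i : ℕ) :
    ψ i (towerLimit.proj (i + 1) s) = towerLimit.proj i s :=
  s.2 i

def towerLimit.lift (F : ∀ i, C(X, N i)) (hF : ∀ i x, ψ i (F (i + 1) x) = F i x) :
    C(X, towerLimit N ψ) :=
  ⟨fun x => ⟨fun i => F i x, fun i => hF i x⟩,
    (continuous_pi fun i => (F i).continuous).subtype_mk _⟩

theorem towerLimit.proj_comp_lift (F : ∀ i, C(X, N i))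
    (hF : ∀ i x, ψ i (F (i + 1) x) = F i x) (i : ℕ) :
    (towerLimit.proj i).comp (towerLimit.lift F hF) = F i :=
  rfl

theorem towerLimit.lift_proj_comp (f : C(X, towerLimit N ψ)) :
    towerLimit.lift (fun i => (towerLimit.proj i).comp f)
      (fun i x => towerLimit.map_proj_succ (f x) i) = f :=
  rfl

end UniversalProperty

def limitHomogeneousFixedPointsEquiv (n : ℕ) :
    limitHomogeneousFixedPoints G M φ hφ n ≃+ limitOfFixedPoints G M φ n where
  toFun f := ⟨fun i => (towerLimit.proj i).comp f.1,
    fun i g t => congrArg (towerLimit.proj i) (f.2 g t),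
    fun i t => towerLimit.map_proj_succ (f.1 t) i⟩
  invFun F := ⟨towerLimit.lift F.1 F.2.2, fun g t => Subtype.ext (funext fun i => F.2.1 i g t)⟩
  left_inv f := Subtype.ext (towerLimit.lift_proj_comp f.1)
  right_inv F := Subtype.ext (funext (towerLimit.proj_comp_lift F.1 F.2.2))
  map_add' _ _ := Subtype.ext rfl

/-- Let `G` be a profinite group and `M₀ ← M₁ ← ⋯` a tower of discrete `G`-modules with
inverse limit `M = lim_i M_i` (with the inverse-limit topology and componentwise
`G`-action).  For each `n ≥ 0`, with `G` acting on `C(G^{n+1}, M)` and on each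
`C(G^{n+1}, M_i)` by `(g • f)(g₁, …, g_{n+1}) = g • f (g⁻¹g₁, …, g⁻¹g_{n+1})`, the
natural map `C(G^{n+1}, M)^G → lim_i (C(G^{n+1}, M_i)^G)` induced by postcomposition
with the projections `M → M_i` is an isomorphism of abelian groups. -/
theorem limitHomogeneousFixedPoints_addEquiv (n : ℕ) :
    ∃ e : limitHomogeneousFixedPoints G M φ hφ n ≃+ limitOfFixedPoints G M φ n,
      ∀ (f : limitHomogeneousFixedPoints G M φ hφ n) (i : ℕ) (t : Fin (n + 1) → G),
        ((e f : ∀ i, C((Fin (n + 1) → G), M i)) i) t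
          = ((f : C((Fin (n + 1) → G), towerLimit M φ)) t : ∀ i, M i) i :=
  ⟨limitHomogeneousFixedPointsEquiv G M φ hφ n, fun _ _ _ => rfl⟩

end Tower
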